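/- Let f be a probability density on R^d. Suppose f_{R,W}(r,w) = r^{d-1}·2^{-d}·exp(-r)·c(F_L(rw₁),...,F_L(rw_d)) is the L^1 angular-radial density on Laplace margins, and suppose f_{R,W}(r,w) ~ 2^{-d}·r^{d-1}·M(e^{-r}, w)·exp(-r·λ(w)) as r → ∞, with M(t,w) slowly varying in t at 0⁺, λ(w) > 0 continuous, f_{R,W} continuous, bounded, and ultimately monotone in r for each w. Then for each w on the L^1 unit sphere, the conditional radial survivor function satisfies F̄_{R|W}(μ+r | w)/F̄_{R|W}(μ | w) → exp(-r·λ(w)) as μ → ∞, for all r > 0; i.e., the conditional radial tail is in the Gumbel domain of attraction with GP shape 0 and scale 1/λ(w). -/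

import Mathlib

open MeasureTheory Filter Set

/-- `L` is slowly varying at `0⁺`. -/
def SlowlyVaryingAtZero (L : ℝ → ℝ) : Prop :=
  ∀ c : ℝ, 0 < c →
    Filter.Tendsto (fun x => L (c * x) / L x) (nhdsWithin 0 (Set.Ioi 0)) (nhds 1)

/-- The standard Laplace cdf. -/
noncomputable def laplaceCdf (x : ℝ) : ℝ :=
  if x < 0 then Real.exp x / 2 else 1 - Real.exp (-x) / 2

/-!
Write `g r = f_{R,W}(r, w)`. Its asymptotics, together with the slow variation of `M`, give
`g (μ + t) / g μ → exp (-t λ)` for every shift `t`. At `t = 1` this limit is `< 1`, which rules out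
eventual increase, so `g` eventually decreases; the ratio at `t = 1` then yields geometric decay,
hence an integrable exponential bound on `g (μ + t) / g μ`. Dominated convergence gives
Karamata's relation `∫_μ^∞ g / g μ → 1 / λ`, and the ratio of tail integrals at `μ + r` and `μ`
tends to `exp (-r λ)`.
-/

open Real Topology

section ShiftRatio

variable {F G g : ℝ → ℝ}

lemma eventually_pos_of_tendsto_div {c : ℝ} (hc : 0 < c)
    (hFG : Tendsto (fun μ => F μ / G μ) atTop (𝓝 c)) (hG : ∀ᶠ μ in atTop, 0 < G μ) :
    ∀ᶠ μ in atTop, 0 < F μ := by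
  filter_upwards [hFG.eventually (eventually_gt_nhds hc), hG] with μ hFGμ hGμ
  exact (div_pos_iff_of_pos_right hGμ).mp hFGμ

lemma tendsto_shift_div_of_tendsto_div {c ℓ t : ℝ} (hc : c ≠ 0)
    (hFG : Tendsto (fun μ => F μ / G μ) atTop (𝓝 c)) (hG : ∀ᶠ μ in atTop, G μ ≠ 0)
    (hGt : Tendsto (fun μ => G (μ + t) / G μ) atTop (𝓝 ℓ)) :
    Tendsto (fun μ => F (μ + t) / F μ) atTop (𝓝 ℓ) := by
  have hshift : Tendsto (fun μ : ℝ => μ + t) atTop atTop :=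
    tendsto_atTop_add_const_right atTop t tendsto_id
  have hlim : Tendsto (fun μ => F (μ + t) / G (μ + t) * (G (μ + t) / G μ) / (F μ / G μ))
      atTop (𝓝 ℓ) := by
    have := ((hFG.comp hshift).mul hGt).div hFG hc
    rwa [mul_div_cancel_left₀ ℓ hc] at this
  refine hlim.congr' ?_
  filter_upwards [hG, hshift.eventually hG] with μ hGμ hGμt
  rcases eq_or_ne (F μ) 0 with hFμ | hFμ
  · simp [hFμ]
  · field_simp

lemma tendsto_shift_div_of_slowlyVaryingAtZero {L : ℝ → ℝ} (hL : SlowlyVaryingAtZero L)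
    (C a : ℝ) (hC : C ≠ 0) (n : ℕ) (t : ℝ) :
    Tendsto (fun μ => (C * (μ + t) ^ n * L (exp (-(μ + t))) * exp (-(μ + t) * a)) /
      (C * μ ^ n * L (exp (-μ)) * exp (-μ * a))) atTop (𝓝 (exp (-t * a))) := by
  have hpow : Tendsto (fun μ : ℝ => (μ + t) ^ n / μ ^ n) atTop (𝓝 1) := by
    have hdiv : Tendsto (fun μ : ℝ => 1 + t * μ⁻¹) atTop (𝓝 1) := by
      simpa using (tendsto_inv_atTop_zero.const_mul t).const_add 1
    refine (by simpa using hdiv.pow n : Tendsto (fun μ : ℝ => (1 + t * μ⁻¹) ^ n) atTop _).congr' ?_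
    filter_upwards [eventually_ne_atTop 0] with μ hμ
    rw [← div_pow]
    field_simp
  have hexp_zero : Tendsto (fun μ : ℝ => exp (-μ)) atTop (𝓝[>] 0) :=
    tendsto_exp_atBot_nhdsGT.comp tendsto_neg_atTop_atBot
  have hslow : Tendsto (fun μ => L (exp (-(μ + t))) / L (exp (-μ))) atTop (𝓝 1) := by
    refine ((hL (exp (-t)) (exp_pos _)).comp hexp_zero).congr fun μ => ?_
    simp only [Function.comp_apply, ← exp_add, neg_add]
    ring_nf
  have hexp : ∀ μ, exp (-(μ + t) * a) / exp (-μ * a) = exp (-t * a) := fun μ => by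
    rw [← exp_sub]; ring_nf
  have hlim := ((tendsto_const_nhds (x := C / C)).mul hpow).mul hslow |>.mul_const (exp (-t * a))
  rw [div_self hC, one_mul, one_mul, one_mul] at hlim
  refine hlim.congr fun μ => ?_
  simp only [mul_div_mul_comm, hexp, div_self hC]

lemma MonotoneOn.one_le_of_tendsto_shift_div {r₀ ℓ : ℝ} (hg : MonotoneOn g (Ici r₀))
    (hpos : ∀ᶠ μ in atTop, 0 < g μ) (hℓ : Tendsto (fun μ => g (μ + 1) / g μ) atTop (𝓝 ℓ)) :
    1 ≤ ℓ := by
  refine ge_of_tendsto hℓ ?_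
  filter_upwards [hpos, eventually_ge_atTop r₀] with μ hgμ hμ
  exact (one_le_div hgμ).mpr (hg hμ (mem_Ici.mpr (by linarith)) (by linarith))

end ShiftRatio

section Karamata

variable {g : ℝ → ℝ}

lemma le_pow_mul_of_le_mul_shift_one {μ₀ q : ℝ} (hq : 0 ≤ q)
    (hstep : ∀ μ, μ₀ ≤ μ → g (μ + 1) ≤ q * g μ) (n : ℕ) {μ : ℝ} (hμ : μ₀ ≤ μ) :
    g (μ + n) ≤ q ^ n * g μ := by
  induction n with
  | zero => simp
  | succ n ih =>
    calc g (μ + (n + 1 : ℕ)) = g ((μ + n) + 1) := by push_cast; ring_nf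
      _ ≤ q * g (μ + n) := hstep _ (by linarith [(n.cast_nonneg : (0 : ℝ) ≤ n)])
      _ ≤ q * (q ^ n * g μ) := mul_le_mul_of_nonneg_left ih hq
      _ = q ^ (n + 1) * g μ := by ring

/-- Geometric decay along integer steps, interpolated by monotonicity. -/
lemma AntitoneOn.le_exp_mul_of_le_mul_shift_one {μ₀ a : ℝ} (ha : 0 ≤ a)
    (hanti : AntitoneOn g (Ici μ₀)) (hnn : ∀ μ, μ₀ ≤ μ → 0 ≤ g μ)
    (hstep : ∀ μ, μ₀ ≤ μ → g (μ + 1) ≤ exp (-a) * g μ) {μ t : ℝ} (hμ : μ₀ ≤ μ) (ht : 0 ≤ t) :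
    g (μ + t) ≤ exp a * exp (-a * t) * g μ := by
  have hn : (⌊t⌋₊ : ℝ) ≤ t := Nat.floor_le ht
  have hn' : t < ⌊t⌋₊ + 1 := Nat.lt_floor_add_one t
  have hn₀ : (0 : ℝ) ≤ ⌊t⌋₊ := Nat.cast_nonneg _
  calc g (μ + t) ≤ g (μ + ⌊t⌋₊) :=
        hanti (mem_Ici.mpr (by linarith)) (mem_Ici.mpr (by linarith)) (by linarith)
    _ ≤ exp (-a) ^ ⌊t⌋₊ * g μ := le_pow_mul_of_le_mul_shift_one (exp_pos _).le hstep _ hμ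
    _ ≤ exp a * exp (-a * t) * g μ := by
        refine mul_le_mul_of_nonneg_right ?_ (hnn μ hμ)
        rw [← exp_nat_mul, ← exp_add, exp_le_exp]
        nlinarith

lemma integral_Ioi_eq_integral_Ioi_zero_add {E : Type*} [NormedAddCommGroup E] [NormedSpace ℝ E]
    (f : ℝ → E) (μ : ℝ) : ∫ s in Ioi μ, f s = ∫ t in Ioi 0, f (μ + t) := by
  rw [← (measurePreserving_add_left volume μ).setIntegral_preimage_emb
    (MeasurableEquiv.addLeft μ).measurableEmbedding f (Ioi μ)]
  congr 1
  ext t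
  simp

variable {a : ℝ}

lemma eventually_shift_div_le_exp (ha : 0 < a)
    (hratio : ∀ t, Tendsto (fun μ => g (μ + t) / g μ) atTop (𝓝 (exp (-t * a))))
    (hpos : ∀ᶠ μ in atTop, 0 < g μ) {r₀ : ℝ} (hanti : AntitoneOn g (Ici r₀)) :
    ∀ᶠ μ in atTop, ∀ t, 0 ≤ t → ‖g (μ + t) / g μ‖ ≤ exp (a / 2) * exp (-(a / 2) * t) := by
  have hlt : exp (-1 * a) < exp (-(a / 2)) := exp_lt_exp.mpr (by linarith)
  obtain ⟨μ₀, hμ₀⟩ := eventually_atTop.mp <|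
    ((hratio 1).eventually (eventually_lt_nhds hlt)).and (hpos.and (eventually_ge_atTop r₀))
  have hstep : ∀ μ, μ₀ ≤ μ → g (μ + 1) ≤ exp (-(a / 2)) * g μ := fun μ hμ =>
    ((div_lt_iff₀ (hμ₀ μ hμ).2.1).mp (hμ₀ μ hμ).1).le
  have hanti₀ : AntitoneOn g (Ici μ₀) :=
    hanti.mono (Ici_subset_Ici.mpr (hμ₀ μ₀ le_rfl).2.2)
  filter_upwards [eventually_ge_atTop μ₀] with μ hμ t ht
  have hgμt : 0 < g (μ + t) := (hμ₀ _ (by linarith)).2.1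
  rw [Real.norm_of_nonneg (div_pos hgμt (hμ₀ μ hμ).2.1).le, div_le_iff₀ (hμ₀ μ hμ).2.1]
  exact hanti₀.le_exp_mul_of_le_mul_shift_one (by linarith) (fun ν hν => (hμ₀ ν hν).2.1.le)
    hstep hμ ht

/-- Karamata's theorem, in exponential scale. -/
theorem tendsto_integral_Ioi_div_self (ha : 0 < a)
    (hratio : ∀ t, Tendsto (fun μ => g (μ + t) / g μ) atTop (𝓝 (exp (-t * a))))
    (hpos : ∀ᶠ μ in atTop, 0 < g μ) {r₀ : ℝ} (hanti : AntitoneOn g (Ici r₀)) :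
    Tendsto (fun μ => (∫ s in Ioi μ, g s) / g μ) atTop (𝓝 a⁻¹) := by
  have hexp_int : ∫ t in Ioi (0 : ℝ), exp (-t * a) = a⁻¹ := by
    simp_rw [neg_mul, ← mul_neg, mul_comm _ (-a)]
    rw [integral_exp_mul_Ioi (neg_lt_zero.mpr ha)]
    simp
  have hdom := tendsto_integral_filter_of_dominated_convergence
    (μ := volume.restrict (Ioi 0)) (fun t => exp (a / 2) * exp (-(a / 2) * t)) ?meas
    ((eventually_shift_div_le_exp ha hratio hpos hanti).mono fun μ hμ => ?bound)
    ((exp_neg_integrableOn_Ioi 0 (half_pos ha)).const_mul _) (ae_of_all _ hratio)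
  · rw [hexp_int] at hdom
    refine hdom.congr fun μ => ?_
    rw [integral_div, ← integral_Ioi_eq_integral_Ioi_zero_add]
  case meas =>
    filter_upwards [eventually_ge_atTop r₀] with μ hμ
    refine (AEMeasurable.div_const ?_ _).aestronglyMeasurable
    exact aemeasurable_restrict_of_antitoneOn measurableSet_Ioi fun s hs t ht hst =>
      hanti (mem_Ici.mpr (by linarith [mem_Ioi.mp hs])) (mem_Ici.mpr (by linarith [mem_Ioi.mp ht]))
        (by linarith)
  case bound =>
    exact (ae_restrict_iff' measurableSet_Ioi).mpr (ae_of_all _ fun t ht => hμ t (le_of_lt ht))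

theorem tendsto_integral_Ioi_add_div_integral_Ioi (ha : 0 < a)
    (hratio : ∀ t, Tendsto (fun μ => g (μ + t) / g μ) atTop (𝓝 (exp (-t * a))))
    (hpos : ∀ᶠ μ in atTop, 0 < g μ) {r₀ : ℝ} (hanti : AntitoneOn g (Ici r₀)) (r : ℝ) :
    Tendsto (fun μ => (∫ s in Ioi (μ + r), g s) / ∫ s in Ioi μ, g s) atTop
      (𝓝 (exp (-r * a))) :=
  tendsto_shift_div_of_tendsto_div (inv_ne_zero ha.ne')
    (tendsto_integral_Ioi_div_self ha hratio hpos hanti) (hpos.mono fun _ => ne_of_gt) (hratio r)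

end Karamata

theorem stmt17_general (d : ℕ)
    (fRW : ℝ → (Fin d → ℝ) → ℝ)
    (lam : (Fin d → ℝ) → ℝ) (M : ℝ → (Fin d → ℝ) → ℝ)
    (hlampos : ∀ w : Fin d → ℝ, (∑ i, |w i|) = 1 → 0 < lam w)
    (hM : ∀ w : Fin d → ℝ, (∑ i, |w i|) = 1 →
      SlowlyVaryingAtZero (fun t => M t w) ∧ ∀ t : ℝ, 0 < t → 0 < M t w)
    (hasymp : ∀ w : Fin d → ℝ, (∑ i, |w i|) = 1 →
      Filter.Tendsto (fun r : ℝ => fRW r w /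
          (2 ^ (-(d : ℝ)) * r ^ (d - 1) * M (Real.exp (-r)) w * Real.exp (-r * lam w)))
        Filter.atTop (nhds 1))
    (hmono : ∀ w : Fin d → ℝ, (∑ i, |w i|) = 1 → ∃ r₀ : ℝ,
      AntitoneOn (fun r => fRW r w) (Set.Ici r₀) ∨ MonotoneOn (fun r => fRW r w) (Set.Ici r₀)) :
    ∀ w : Fin d → ℝ, (∑ i, |w i|) = 1 → ∀ r : ℝ, 0 < r →
      Filter.Tendsto (fun μ : ℝ =>
          (∫ s in Set.Ioi (μ + r), fRW s w) / (∫ s in Set.Ioi μ, fRW s w))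
        Filter.atTop (nhds (Real.exp (-r * lam w))) := by
  intro w hw r _
  obtain ⟨hslow, hMpos⟩ := hM w hw
  have hC : (2 : ℝ) ^ (-(d : ℝ)) ≠ 0 := (rpow_pos_of_pos two_pos _).ne'
  have hmodel_pos : ∀ᶠ s in atTop,
      0 < 2 ^ (-(d : ℝ)) * s ^ (d - 1) * M (exp (-s)) w * exp (-s * lam w) := by
    filter_upwards [eventually_gt_atTop 0] with s hs
    have := hMpos _ (exp_pos (-s))
    positivity
  have hpos := eventually_pos_of_tendsto_div one_pos (hasymp w hw) hmodel_pos
  have hratio (t : ℝ) : Tendsto (fun μ => fRW (μ + t) w / fRW μ w) atTop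
      (𝓝 (exp (-t * lam w))) :=
    tendsto_shift_div_of_tendsto_div one_ne_zero (hasymp w hw) (hmodel_pos.mono fun _ => ne_of_gt)
      (tendsto_shift_div_of_slowlyVaryingAtZero hslow _ (lam w) hC (d - 1) t)
  obtain ⟨r₀, hanti | hincr⟩ := hmono w hw
  · exact tendsto_integral_Ioi_add_div_integral_Ioi (hlampos w hw) hratio hpos hanti r
  · have hlt : exp (-1 * lam w) < 1 := exp_lt_one_iff.mpr (by linarith [hlampos w hw])
    exact absurd (hincr.one_le_of_tendsto_shift_div hpos (hratio 1)) hlt.not_ge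

/-- SPAR on Laplace margins: if the `L¹` angular-radial density
`f_{R,W}(r,w) = r^{d-1}·2^{-d}·e^{-r}·c(F_L(rw₁),...,F_L(rw_d))` satisfies
`f_{R,W}(r,w) ~ 2^{-d} r^{d-1} M(e^{-r},w) exp(-r λ(w))` as `r → ∞` (with `M(·,w)` slowly
varying at `0⁺` and `λ` positive and continuous), is continuous, bounded, nonnegative and
ultimately monotone in `r`, then for each `w` on the `L¹` unit sphere the conditional radial
tail satisfies `F̄(μ+r|w)/F̄(μ|w) → exp(-r λ(w))` as `μ → ∞`, i.e. GP shape `0` and scale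
`1/λ(w)`. -/
theorem stmt17 (d : ℕ) (hd : 0 < d)
    (fRW : ℝ → (Fin d → ℝ) → ℝ) (c : (Fin d → ℝ) → ℝ)
    (lam : (Fin d → ℝ) → ℝ) (M : ℝ → (Fin d → ℝ) → ℝ)
    (hdef : ∀ r : ℝ, 0 ≤ r → ∀ w : Fin d → ℝ, (∑ i, |w i|) = 1 →
      fRW r w = r ^ (d - 1) * 2 ^ (-(d : ℝ)) * Real.exp (-r) *
        c (fun i => laplaceCdf (r * w i)))
    (hlamc : Continuous lam)
    (hlampos : ∀ w : Fin d → ℝ, (∑ i, |w i|) = 1 → 0 < lam w)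
    (hM : ∀ w : Fin d → ℝ, (∑ i, |w i|) = 1 →
      SlowlyVaryingAtZero (fun t => M t w) ∧ ∀ t : ℝ, 0 < t → 0 < M t w)
    (hasymp : ∀ w : Fin d → ℝ, (∑ i, |w i|) = 1 →
      Filter.Tendsto (fun r : ℝ => fRW r w /
          (2 ^ (-(d : ℝ)) * r ^ (d - 1) * M (Real.exp (-r)) w * Real.exp (-r * lam w)))
        Filter.atTop (nhds 1))
    (hcont : Continuous (fun p : ℝ × (Fin d → ℝ) => fRW p.1 p.2))
    (hbdd : ∃ B : ℝ, ∀ (r : ℝ) (w : Fin d → ℝ), |fRW r w| ≤ B)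
    (hnn : ∀ (r : ℝ) (w : Fin d → ℝ), 0 ≤ fRW r w)
    (hmono : ∀ w : Fin d → ℝ, (∑ i, |w i|) = 1 → ∃ r₀ : ℝ,
      AntitoneOn (fun r => fRW r w) (Set.Ici r₀) ∨ MonotoneOn (fun r => fRW r w) (Set.Ici r₀)) :
    ∀ w : Fin d → ℝ, (∑ i, |w i|) = 1 → ∀ r : ℝ, 0 < r →
      Filter.Tendsto (fun μ : ℝ =>
          (∫ s in Set.Ioi (μ + r), fRW s w) / (∫ s in Set.Ioi μ, fRW s w))
        Filter.atTop (nhds (Real.exp (-r * lam w))) :=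
  stmt17_general d fRW lam M hlampos hM hasymp hmono
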